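/- ℓ₁ is block finitely represented in each block basis of (e_i): for every ε > 0, every m ∈ ℕ, and every normalized block sequence (y_n) of (e_i), there exists a block sequence (z_i)_{i=1}^m of (y_n) (each z_i a nonzero finite linear combination of consecutive y_n's, with z₁ < z₂ < ⋯ < z_m) with ‖z_i‖ = 1 for all i such that ‖Σ_{i=1}^m α_i z_i‖ ≥ (1/(1+ε)) Σ_{i=1}^m |α_i| for all real scalars (α_i)_{i=1}^m. -/
import Mathlib


abbrev c00 : Type := ℕ →₀ ℝ

noncomputable def flog (x : ℝ) : ℝ := Real.logb 2 (x + 1)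

noncomputable def supNorm (x : c00) : ℝ := ⨆ i, |x i|

def proj (E : Finset ℕ) (x : c00) : c00 := x.filter (· ∈ E)

def FLt (A B : Finset ℕ) : Prop := ∀ a ∈ A, ∀ b ∈ B, a < b

def IsNormC00 (N : c00 → ℝ) : Prop :=
  (∀ x, N x = 0 ↔ x = 0) ∧ (∀ x y, N (x + y) ≤ N x + N y) ∧
    ∀ (a : ℝ) (x : c00), N (a • x) = |a| * N x

def schSet (N : c00 → ℝ) (x : c00) : Set ℝ :=
  {s | ∃ n : ℕ, 2 ≤ n ∧ ∃ E : Fin n → Finset ℕ,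
    (∀ i j : Fin n, i < j → FLt (E i) (E j)) ∧
    s = (flog n)⁻¹ * ∑ i, N (proj (E i) x)}

def IsSchlumprechtNorm (N : c00 → ℝ) : Prop :=
  IsNormC00 N ∧ ∀ x : c00, IsLUB (insert (supNorm x) (schSet N x)) (N x)

def IsBlockSeq (x : ℕ → c00) : Prop :=
  (∀ n, x n ≠ 0) ∧ ∀ n, ∀ i ∈ (x n).support, ∀ j ∈ (x (n+1)).support, i < j

def SeqEquiv (N : c00 → ℝ) (u v : ℕ → c00) : Prop :=
  ∃ c : ℝ, 1 ≤ c ∧ ∀ a : ℕ →₀ ℝ,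
    (1 / c) * N (a.sum fun i t => t • u i) ≤ N (a.sum fun i t => t • v i) ∧
    N (a.sum fun i t => t • v i) ≤ c * N (a.sum fun i t => t • u i)

/-! ### Auxiliary lemmas -/

section Aux

variable {N : c00 → ℝ}

theorem myN_zero (hN : IsNormC00 N) : N 0 = 0 := (hN.1 0).2 rfl

theorem myN_smul (hN : IsNormC00 N) (a : ℝ) (x : c00) : N (a • x) = |a| * N x := hN.2.2 a x

theorem myN_nonneg (hN : IsNormC00 N) (x : c00) : 0 ≤ N x := by
  have h1 : N (x + (-1 : ℝ) • x) ≤ N x + N ((-1 : ℝ) • x) := hN.2.1 _ _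
  have h2 : x + (-1 : ℝ) • x = 0 := by
    rw [neg_one_smul]; exact add_neg_cancel x
  rw [h2, myN_zero hN, myN_smul hN] at h1
  simp only [abs_neg, abs_one, one_mul] at h1
  linarith

theorem myN_pos (hN : IsNormC00 N) {x : c00} (hx : x ≠ 0) : 0 < N x :=
  lt_of_le_of_ne (myN_nonneg hN x) (fun h => hx ((hN.1 x).1 h.symm))

theorem proj_apply (E : Finset ℕ) (x : c00) (a : ℕ) :
    proj E x a = if a ∈ E then x a else 0 := rfl

theorem proj_sum (E : Finset ℕ) {ι : Type*} (s : Finset ι) (g : ι → c00) :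
    proj E (∑ i ∈ s, g i) = ∑ i ∈ s, proj E (g i) := by
  ext a
  rw [Finsupp.finset_sum_apply, proj_apply, Finsupp.finset_sum_apply]
  split_ifs with h
  · exact Finset.sum_congr rfl fun i _ => by rw [proj_apply, if_pos h]
  · exact (Finset.sum_eq_zero fun i _ => by rw [proj_apply, if_neg h]).symm

theorem proj_eq_self {E : Finset ℕ} {x : c00} (h : x.support ⊆ E) : proj E x = x := by
  ext a
  rw [proj_apply]
  split_ifs with ha
  · rfl
  · by_contra hc
    exact ha (h (Finsupp.mem_support_iff.2 fun h0 => hc h0.symm))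

theorem proj_eq_zero {E : Finset ℕ} {x : c00} (h : ∀ a ∈ x.support, a ∉ E) : proj E x = 0 := by
  ext a
  rw [proj_apply]
  split_ifs with ha
  · by_cases hs : a ∈ x.support
    · exact absurd ha (h a hs)
    · simpa using Finsupp.notMem_support_iff.1 hs
  · rfl

theorem flog_pos' {x : ℝ} (hx : 0 < x) : 0 < flog x :=
  Real.logb_pos one_lt_two (by linarith)

theorem flog_mono {x y : ℝ} (hx : 0 ≤ x) (hxy : x ≤ y) : flog x ≤ flog y :=
  Real.logb_le_logb_of_le one_lt_two (by linarith) (by linarith)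

/-- The key lower estimate coming from the implicit equation. -/
theorem lower_est (hN : IsSchlumprechtNorm N) (v : c00) {p : ℕ} (hp : 2 ≤ p)
    (E : Fin p → Finset ℕ) (hE : ∀ i j : Fin p, i < j → FLt (E i) (E j)) :
    (flog p)⁻¹ * ∑ i, N (proj (E i) v) ≤ N v :=
  (hN.2 v).1 (Set.mem_insert_of_mem _ ⟨p, hp, E, hE, rfl⟩)

variable {y : ℕ → c00}

theorem supp_lt (hy : IsBlockSeq y) {n n' : ℕ} (h : n < n') :
    FLt (y n).support (y n').support := by
  induction n', h using Nat.le_induction with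
  | base => exact hy.2 n
  | succ k hk ih =>
    intro i hi j hj
    obtain ⟨t, ht⟩ := Finsupp.support_nonempty_iff.2 (hy.1 k)
    exact lt_trans (ih i hi t ht) (hy.2 k t ht j hj)

theorem supp_ne (hy : IsBlockSeq y) {n n' : ℕ} (h : n ≠ n') {a : ℕ}
    (ha : a ∈ (y n).support) (ha' : a ∈ (y n').support) : False := by
  rcases lt_or_gt_of_ne h with h' | h'
  · exact lt_irrefl a (supp_lt hy h' a ha a ha')
  · exact lt_irrefl a (supp_lt hy h' a ha' a ha)

theorem proj_block (hy : IsBlockSeq y) (I : Finset ℕ) (β : ℕ → ℝ) {n₀ : ℕ} (hn₀ : n₀ ∈ I) :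
    proj ((y n₀).support) (∑ n ∈ I, β n • y n) = β n₀ • y n₀ := by
  rw [proj_sum]
  rw [Finset.sum_eq_single n₀]
  · exact proj_eq_self Finsupp.support_smul
  · intro n _ hne
    refine proj_eq_zero fun a ha hae => ?_
    exact supp_ne hy hne (Finsupp.support_smul ha) hae
  · intro h; exact absurd hn₀ h

/-- ℓ₁ lower bound for a block combination with at least two blocks. -/
theorem block_l1 (hN : IsSchlumprechtNorm N) (hy : IsBlockSeq y) (hyn : ∀ n, N (y n) = 1)
    (I : Finset ℕ) (β : ℕ → ℝ) (hI : 2 ≤ I.card) :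
    (flog I.card)⁻¹ * ∑ n ∈ I, |β n| ≤ N (∑ n ∈ I, β n • y n) := by
  classical
  set v := ∑ n ∈ I, β n • y n with hv
  set iso := I.orderIsoOfFin rfl with hiso
  have key : ∀ i : Fin I.card, N (proj ((y ((iso i : ℕ))).support) v) = |β (iso i : ℕ)| := by
    intro i
    rw [hv, proj_block hy I β (iso i).2, myN_smul hN.1, hyn, mul_one]
  have hord : ∀ i j : Fin I.card, i < j →
      FLt ((y ((iso i : ℕ))).support) ((y ((iso j : ℕ))).support) := by
    intro i j hij
    exact supp_lt hy (Subtype.coe_lt_coe.2 (iso.strictMono hij))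
  have hle := lower_est hN v hI (fun i => (y ((iso i : ℕ))).support) hord
  have hsum : ∑ i : Fin I.card, N (proj ((y ((iso i : ℕ))).support) v) = ∑ n ∈ I, |β n| := by
    rw [Finset.sum_congr rfl fun i _ => key i]
    rw [← Finset.sum_coe_sort I (fun n => |β n|)]
    exact Equiv.sum_comp iso.toEquiv (fun x => |β (x : ℕ)|)
  rwa [hsum] at hle

theorem nat_pow_add_one_le {m k : ℕ} (hm : 1 ≤ m) (hk : 1 ≤ k) : m ^ k + 1 ≤ (m + 1) ^ k := by
  induction k with
  | zero => omega
  | succ k ih =>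
    rcases Nat.eq_zero_or_pos k with h | h
    · subst h; simp
    · have h1 := ih h
      have h2 : (m + 1) ^ (k + 1) = (m + 1) ^ k * (m + 1) := pow_succ _ _
      have h3 : (m ^ k + 1) * (m + 1) ≤ (m + 1) ^ k * (m + 1) := Nat.mul_le_mul_right _ h1
      have h4 : (m ^ k + 1) * (m + 1) = m ^ (k + 1) + m ^ k + m + 1 := by ring
      have h5 : 1 ≤ m ^ k := Nat.one_le_pow _ _ hm
      omega

end Aux

/-- Proposition 2.2: `ℓ₁` is block finitely represented in each
normalized block sequence of `(e_i)`. -/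
theorem ell1_block_finitely_represented
    (N : c00 → ℝ) (hN : IsSchlumprechtNorm N)
    (ε : ℝ) (hε : 0 < ε) (m : ℕ)
    (y : ℕ → c00) (hy : IsBlockSeq y) (hyn : ∀ n, N (y n) = 1) :
    ∃ (I : Fin m → Finset ℕ) (c : ℕ → ℝ) (z : Fin m → c00),
      (∀ i j : Fin m, i < j → FLt (I i) (I j)) ∧
      (∀ i, z i = ∑ n ∈ I i, c n • y n) ∧
      (∀ i, N (z i) = 1) ∧
      ∀ α : Fin m → ℝ,
        (1 / (1 + ε)) * ∑ i, |α i| ≤ N (∑ i, α i • z i) := by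
  classical
  rcases Nat.eq_zero_or_pos m with hm | hm
  · subst hm
    refine ⟨fun _ => ∅, fun _ => 0, fun _ => 0, fun i => i.elim0, fun i => i.elim0,
      fun i => i.elim0, fun α => ?_⟩
    simp [myN_zero hN.1]
  by_contra hcon
  push_neg at hcon
  have hε1 : (1 : ℝ) < 1 + ε := by linarith
  -- The inductive construction of ℓ₁-rich normalized vectors.
  have key : ∀ l : ℕ, ∀ n₀ : ℕ, ∃ (I : Finset ℕ) (β : ℕ → ℝ),
      I.Nonempty ∧ (∀ n ∈ I, n₀ ≤ n) ∧ I.card ≤ m ^ l ∧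
      N (∑ n ∈ I, β n • y n) = 1 ∧ (1 + ε) ^ l ≤ ∑ n ∈ I, |β n| := by
    intro l
    induction l with
    | zero =>
      intro n₀
      refine ⟨{n₀}, fun _ => 1, ⟨n₀, Finset.mem_singleton_self n₀⟩, ?_, by simp, ?_, by simp⟩
      · intro n hn; rw [Finset.mem_singleton] at hn; omega
      · simp [hyn n₀]
    | succ l IH =>
      intro n₀
      have hstep : ∀ k : ℕ, ∃ p : Finset ℕ × (ℕ → ℝ),
          p.1.Nonempty ∧ (∀ n ∈ p.1, k ≤ n) ∧ p.1.card ≤ m ^ l ∧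
          N (∑ n ∈ p.1, p.2 n • y n) = 1 ∧ (1 + ε) ^ l ≤ ∑ n ∈ p.1, |p.2 n| := by
        intro k
        obtain ⟨I, β, h⟩ := IH k
        exact ⟨(I, β), h⟩
      obtain ⟨f, hf0, hfS⟩ : ∃ f : ℕ → Finset ℕ × (ℕ → ℝ),
          ((f 0).1.Nonempty ∧ (∀ n ∈ (f 0).1, n₀ ≤ n) ∧ (f 0).1.card ≤ m ^ l ∧
            N (∑ n ∈ (f 0).1, (f 0).2 n • y n) = 1 ∧
            (1 + ε) ^ l ≤ ∑ n ∈ (f 0).1, |(f 0).2 n|) ∧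
          ∀ i : ℕ, ((f (i+1)).1.Nonempty ∧ (∀ n ∈ (f (i+1)).1, (f i).1.sup id + 1 ≤ n) ∧
            (f (i+1)).1.card ≤ m ^ l ∧
            N (∑ n ∈ (f (i+1)).1, (f (i+1)).2 n • y n) = 1 ∧
            (1 + ε) ^ l ≤ ∑ n ∈ (f (i+1)).1, |(f (i+1)).2 n|) := by
        refine ⟨fun i => Nat.rec (Classical.choose (hstep n₀))
          (fun _ prev => Classical.choose (hstep (prev.1.sup id + 1))) i,
          Classical.choose_spec (hstep n₀), fun i => Classical.choose_spec (hstep _)⟩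
      have hne : ∀ i, (f i).1.Nonempty := by
        intro i; cases i with
        | zero => exact hf0.1
        | succ i => exact (hfS i).1
      have hQall : ∀ i : ℕ, N (∑ n ∈ (f i).1, (f i).2 n • y n) = 1 ∧
          (1 + ε) ^ l ≤ ∑ n ∈ (f i).1, |(f i).2 n| ∧ (f i).1.card ≤ m ^ l := by
        intro i; cases i with
        | zero => exact ⟨hf0.2.2.2.1, hf0.2.2.2.2, hf0.2.2.1⟩
        | succ i => exact ⟨(hfS i).2.2.2.1, (hfS i).2.2.2.2, (hfS i).2.2.1⟩
      have hlow : ∀ i : ℕ, ∀ n ∈ (f i).1, n₀ ≤ n := by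
        intro i
        induction i with
        | zero => exact hf0.2.1
        | succ i ih =>
          intro n hn
          obtain ⟨t, ht⟩ := hne i
          have h1 : n₀ ≤ t := ih t ht
          have h2 : t ≤ (f i).1.sup id := Finset.le_sup (f := id) ht
          have h3 := (hfS i).2.1 n hn
          omega
      have hchain : ∀ i j : ℕ, i < j → ∀ n ∈ (f i).1, ∀ n' ∈ (f j).1, n < n' := by
        intro i j hij
        induction j, hij using Nat.le_induction with
        | base =>
          intro n hn n' hn'
          have h2 : n ≤ (f i).1.sup id := Finset.le_sup (f := id) hn
          have h3 := (hfS i).2.1 n' hn'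
          omega
        | succ j hj ih =>
          intro n hn n' hn'
          obtain ⟨t, ht⟩ := hne j
          have h1 := ih n hn t ht
          have h2 : t ≤ (f j).1.sup id := Finset.le_sup (f := id) ht
          have h3 := (hfS j).2.1 n' hn'
          omega
      -- apply the negated goal to this family of blocks
      set z : Fin m → c00 := fun i => ∑ n ∈ (f (i : ℕ)).1, (f (i : ℕ)).2 n • y n with hz
      have huniq : ∀ (i : Fin m) (n : ℕ), n ∈ (f (i : ℕ)).1 →
          ∀ (h : ∃ j : Fin m, n ∈ (f (j : ℕ)).1), ((h.choose : Fin m) : ℕ) = (i : ℕ) := by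
        intro i n hn h
        by_contra hne'
        rcases lt_or_gt_of_ne hne' with h' | h'
        · exact lt_irrefl n (hchain _ _ h' n h.choose_spec n hn)
        · exact lt_irrefl n (hchain _ _ h' n hn n h.choose_spec)
      set c : ℕ → ℝ := fun n =>
        if h : ∃ i : Fin m, n ∈ (f (i : ℕ)).1 then (f ((h.choose : Fin m) : ℕ)).2 n else 0
        with hc
      have hcval : ∀ i : Fin m, ∀ n ∈ (f (i : ℕ)).1, c n = (f (i : ℕ)).2 n := by
        intro i n hn
        have hex : ∃ j : Fin m, n ∈ (f (j : ℕ)).1 := ⟨i, hn⟩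
        rw [hc]
        simp only
        rw [dif_pos hex, huniq i n hn hex]
      have hFLt : ∀ i j : Fin m, i < j → FLt (f (i : ℕ)).1 (f (j : ℕ)).1 :=
        fun i j hij a ha b hb => hchain i j hij a ha b hb
      have hrepr : ∀ i : Fin m, z i = ∑ n ∈ (f (i : ℕ)).1, c n • y n := by
        intro i; rw [hz]
        exact (Finset.sum_congr rfl fun n hn => by rw [hcval i n hn]).symm
      obtain ⟨α, hα⟩ := hcon (fun i => (f (i : ℕ)).1) c z hFLt hrepr
        (fun i => (hQall (i : ℕ)).1)
      set w : c00 := ∑ i, α i • z i with hw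
      have hν0 : 0 ≤ N w := myN_nonneg hN.1 w
      have hθpos : (0 : ℝ) < 1 / (1 + ε) := by positivity
      have hSa : 0 < ∑ i, |α i| := by
        by_contra hle
        push_neg at hle
        have : (1 / (1 + ε)) * ∑ i, |α i| ≤ 0 :=
          mul_nonpos_of_nonneg_of_nonpos (le_of_lt hθpos) hle
        linarith
      -- the combined block family
      set I' : Finset ℕ := Finset.univ.biUnion (fun i : Fin m => (f (i : ℕ)).1) with hI'
      have hdisj : Set.PairwiseDisjoint (↑(Finset.univ : Finset (Fin m)))
          (fun i : Fin m => (f (i : ℕ)).1) := by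
        intro i _ j _ hij
        refine Finset.disjoint_left.2 fun n hni hnj => ?_
        have hne2 : (i : ℕ) ≠ (j : ℕ) := fun h => hij (Fin.ext h)
        rcases lt_or_gt_of_ne hne2 with h' | h'
        · exact lt_irrefl n (hchain _ _ h' n hni n hnj)
        · exact lt_irrefl n (hchain _ _ h' n hnj n hni)
      set β' : ℕ → ℝ := fun n =>
        if h : ∃ i : Fin m, n ∈ (f (i : ℕ)).1
        then α h.choose * (f ((h.choose : Fin m) : ℕ)).2 n else 0 with hβ'
      have hβ'val : ∀ i : Fin m, ∀ n ∈ (f (i : ℕ)).1, β' n = α i * (f (i : ℕ)).2 n := by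
        intro i n hn
        have hex : ∃ j : Fin m, n ∈ (f (j : ℕ)).1 := ⟨i, hn⟩
        have hu := huniq i n hn hex
        rw [hβ']
        simp only
        rw [dif_pos hex, hu, Fin.ext (hu)]
      have hwrep : ∑ n ∈ I', β' n • y n = w := by
        rw [hI', Finset.sum_biUnion hdisj, hw]
        refine Finset.sum_congr rfl fun i _ => ?_
        rw [Finset.sum_congr rfl (fun n hn => by rw [hβ'val i n hn]), hz]
        rw [Finset.smul_sum]
        exact Finset.sum_congr rfl fun n hn => (smul_smul _ _ _).symm
      -- positivity of the norm of w
      have hνpos : 0 < N w := by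
        refine myN_pos hN.1 fun hw0 => ?_
        obtain ⟨i₀, hi₀⟩ : ∃ i : Fin m, α i ≠ 0 := by
          by_contra hno; push_neg at hno
          rw [Finset.sum_eq_zero (fun i _ => by rw [hno i, abs_zero])] at hSa
          exact lt_irrefl 0 hSa
        obtain ⟨ns, hns, hβns⟩ : ∃ ns ∈ (f (i₀ : ℕ)).1, (f (i₀ : ℕ)).2 ns ≠ 0 := by
          by_contra hno; push_neg at hno
          have hz0 : ∑ n ∈ (f (i₀ : ℕ)).1, |(f (i₀ : ℕ)).2 n| = 0 :=
            Finset.sum_eq_zero (fun n hn => by rw [hno n hn, abs_zero])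
          have h1 := (hQall (i₀ : ℕ)).2.1
          have h2 : (0 : ℝ) < (1 + ε) ^ l := by positivity
          rw [hz0] at h1; linarith
        have hmem : ns ∈ I' := Finset.mem_biUnion.2 ⟨i₀, Finset.mem_univ _, hns⟩
        have hproj : proj ((y ns).support) w = β' ns • y ns := by
          rw [← hwrep]; exact proj_block hy I' β' hmem
        rw [hw0] at hproj
        have hpz : proj ((y ns).support) (0 : c00) = 0 := by
          ext a; rw [proj_apply]; split_ifs <;> rfl
        rw [hpz] at hproj
        rcases smul_eq_zero.1 hproj.symm with h | h
        · rw [hβ'val i₀ ns hns] at h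
          rcases mul_eq_zero.1 h with h' | h'
          · exact hi₀ h'
          · exact hβns h'
        · exact hy.1 ns h
      -- mass bound
      have hmass : (1 + ε) ^ l * ∑ i, |α i| ≤ ∑ n ∈ I', |β' n| := by
        rw [hI', Finset.sum_biUnion hdisj, Finset.mul_sum]
        refine Finset.sum_le_sum fun i _ => ?_
        rw [Finset.sum_congr rfl (fun n hn => by rw [hβ'val i n hn, abs_mul]),
          ← Finset.mul_sum]
        calc (1 + ε) ^ l * |α i| = |α i| * (1 + ε) ^ l := mul_comm _ _
          _ ≤ |α i| * ∑ n ∈ (f (i : ℕ)).1, |(f (i : ℕ)).2 n| :=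
              mul_le_mul_of_nonneg_left (hQall (i : ℕ)).2.1 (abs_nonneg _)
      -- package the new block
      refine ⟨I', fun n => (N w)⁻¹ * β' n, ?_, ?_, ?_, ?_, ?_⟩
      · obtain ⟨t, ht⟩ := hne 0
        exact ⟨t, Finset.mem_biUnion.2 ⟨⟨0, hm⟩, Finset.mem_univ _, ht⟩⟩
      · intro n hn
        obtain ⟨i, _, hni⟩ := Finset.mem_biUnion.1 hn
        exact hlow (i : ℕ) n hni
      · calc I'.card ≤ ∑ i : Fin m, (f (i : ℕ)).1.card := Finset.card_biUnion_le
          _ ≤ ∑ _i : Fin m, m ^ l := Finset.sum_le_sum fun i _ => (hQall (i : ℕ)).2.2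
          _ = m * m ^ l := by
              rw [Finset.sum_const, Finset.card_univ, Fintype.card_fin, smul_eq_mul]
          _ = m ^ (l + 1) := (pow_succ' m l).symm
      · have hr : ∑ n ∈ I', ((N w)⁻¹ * β' n) • y n = (N w)⁻¹ • w := by
          rw [← hwrep, Finset.smul_sum]
          exact Finset.sum_congr rfl fun n _ => (smul_smul _ _ _).symm
        rw [hr, myN_smul hN.1, abs_inv, abs_of_pos hνpos, inv_mul_cancel₀ (ne_of_gt hνpos)]
      · have h1 : ∑ n ∈ I', |(N w)⁻¹ * β' n| = (N w)⁻¹ * ∑ n ∈ I', |β' n| := by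
          rw [Finset.mul_sum]
          exact Finset.sum_congr rfl fun n _ => by
            rw [abs_mul, abs_inv, abs_of_pos hνpos]
        rw [h1]
        have h2 : (1 + ε) * N w < ∑ i, |α i| := by
          calc (1 + ε) * N w < (1 + ε) * ((1 / (1 + ε)) * ∑ i, |α i|) :=
              mul_lt_mul_of_pos_left hα (by linarith)
            _ = ∑ i, |α i| := by field_simp
        rw [pow_succ, inv_mul_eq_div, le_div_iff₀ hνpos]
        have hPpos : (0 : ℝ) < (1 + ε) ^ l := by positivity
        nlinarith [mul_lt_mul_of_pos_left h2 hPpos, hmass]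
  -- final contradiction
  have hmR : (1 : ℝ) ≤ (m : ℝ) := by exact_mod_cast hm
  have hC : (0 : ℝ) < flog m := flog_pos' (by linarith)
  obtain ⟨k, hk1, hkgt⟩ : ∃ k : ℕ, 1 ≤ k ∧ (k : ℝ) * flog m < (1 + ε) ^ k := by
    have htend := tendsto_pow_const_div_const_pow_of_one_lt 1 hε1
    have hev : ∀ᶠ n : ℕ in Filter.atTop, ((n : ℝ)) ^ 1 / (1 + ε) ^ n < (flog m)⁻¹ :=
      htend.eventually (gt_mem_nhds (by positivity))
    obtain ⟨k, hk⟩ := (hev.and (Filter.eventually_ge_atTop 1)).exists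
    refine ⟨k, hk.2, ?_⟩
    have h1 : ((k : ℝ)) ^ 1 / (1 + ε) ^ k < (flog m)⁻¹ := hk.1
    rw [pow_one] at h1
    have hp : (0 : ℝ) < (1 + ε) ^ k := by positivity
    rw [div_lt_iff₀ hp] at h1
    calc (k : ℝ) * flog m < (flog m)⁻¹ * (1 + ε) ^ k * flog m :=
        mul_lt_mul_of_pos_right h1 hC
      _ = (1 + ε) ^ k := by field_simp
  obtain ⟨I, β, hIne, _, hIcard, hInorm, hImass⟩ := key k 0
  have hp1 : 1 ≤ I.card := Finset.card_pos.2 hIne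
  have hgt1 : (1 : ℝ) < (1 + ε) ^ k := one_lt_pow₀ hε1 (by omega)
  rcases eq_or_lt_of_le hp1 with hp | hp
  · obtain ⟨n₁, hn₁⟩ := Finset.card_eq_one.1 hp.symm
    rw [hn₁, Finset.sum_singleton] at hInorm
    rw [hn₁, Finset.sum_singleton] at hImass
    rw [myN_smul hN.1, hyn, mul_one] at hInorm
    rw [hInorm] at hImass
    linarith
  · have h2 : 2 ≤ I.card := hp
    have hl1 := block_l1 hN hy hyn I β h2
    rw [hInorm] at hl1
    have hcast : ((I.card : ℝ)) ≤ ((m ^ k : ℕ) : ℝ) := by exact_mod_cast hIcard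
    have hflog1 : flog (I.card) ≤ flog ((m : ℝ) ^ k) := by
      have hc2 : ((m ^ k : ℕ) : ℝ) = (m : ℝ) ^ k := by push_cast; ring
      refine flog_mono (by positivity) ?_
      rw [← hc2]; exact hcast
    have hflog2 : flog ((m : ℝ) ^ k) ≤ (k : ℝ) * flog m := by
      have hnat : m ^ k + 1 ≤ (m + 1) ^ k := nat_pow_add_one_le hm hk1
      have hcast2 : ((m : ℝ)) ^ k + 1 ≤ ((m : ℝ) + 1) ^ k := by exact_mod_cast hnat
      unfold flog
      calc Real.logb 2 ((m : ℝ) ^ k + 1) ≤ Real.logb 2 (((m : ℝ) + 1) ^ k) :=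
          Real.logb_le_logb_of_le one_lt_two (by positivity) hcast2
        _ = (k : ℝ) * Real.logb 2 ((m : ℝ) + 1) := Real.logb_pow _ _ _
    have hflogpos : 0 < flog (I.card) := flog_pos' (by exact_mod_cast hp1)
    have hbig : flog (I.card) < ∑ n ∈ I, |β n| := by
      calc flog (I.card) ≤ (k : ℝ) * flog m := le_trans hflog1 hflog2
        _ < (1 + ε) ^ k := hkgt
        _ ≤ _ := hImass
    have h5 : (flog (I.card))⁻¹ * flog (I.card) < (flog (I.card))⁻¹ * ∑ n ∈ I, |β n| :=
      mul_lt_mul_of_pos_left hbig (inv_pos.2 hflogpos)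
    rw [inv_mul_cancel₀ (ne_of_gt hflogpos)] at h5
    linarith
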